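/- For the 5-dimensional Lotka-Volterra system of type [2,0,0] with antisymmetric matrix A having upper entries A_{12}=a₁, A_{13}=A_{14}=A_{23}=A_{24}=(b₁c₂−b₂c₁)/a₃, A_{34}=a₂, A_{15}=A_{25}=b₁, A_{35}=A_{45}=b₂, the function Q = (x₁+x₂)^{b₂}(x₃+x₄)^{−b₁} x₅^{(c₂b₁−c₁b₂)/a₃} is a constant of motion and C = (x₁/x₂)^{b₁a₂}(x₃/x₄)^{a₁b₂} x₅^{a₁a₂} is a Casimir of the bracket {x_i,x_j}=A_{ij}x_ix_j (assuming a₃ ≠ 0). -/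

import Mathlib

open Real Finset

/-- i-th component of the gradient of `F` at `x`. -/
noncomputable def grad {n : ℕ} (F : (Fin n → ℝ) → ℝ) (x : Fin n → ℝ) (i : Fin n) : ℝ :=
  fderiv ℝ F x (Pi.single i 1)

/-- Lie derivative (directional derivative) of `F` along the vector field `f` at `x`. -/
noncomputable def lieDeriv {n : ℕ} (F : (Fin n → ℝ) → ℝ) (f : (Fin n → ℝ) → Fin n → ℝ)
    (x : Fin n → ℝ) : ℝ := ∑ i, grad F x i * f x i

/-- The Poisson bracket {F,G}(x) = Σ_{i,j} A_{ij} x_i x_j ∂_iF ∂_jG. -/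
noncomputable def pbracket {n : ℕ} (A : Matrix (Fin n) (Fin n) ℝ)
    (F G : (Fin n → ℝ) → ℝ) (x : Fin n → ℝ) : ℝ :=
  ∑ i, ∑ j, A i j * x i * x j * grad F x i * grad G x j

/-- The (possibly inhomogeneous) Lotka-Volterra vector field
`f_i(x) = x_i (r_i + Σ_j A_{ij} x_j)`. -/
def lvField {n : ℕ} (A : Matrix (Fin n) (Fin n) ℝ) (r : Fin n → ℝ)
    (x : Fin n → ℝ) (i : Fin n) : ℝ := x i * (r i + ∑ j, A i j * x j)

/-!
Both claims are logarithmic-derivative computations. For a product `F = ∏ ℓₖ ^ μₖ` of powers of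
positive linear forms, `dF = F · ∑ μₖ dℓₖ / ℓₖ`. Along the Lotka-Volterra field,
`(ẋ₁ + ẋ₂)/(x₁ + x₂) = d (x₃ + x₄) + b₁ x₅`, `(ẋ₃ + ẋ₄)/(x₃ + x₄) = -d (x₁ + x₂) + b₂ x₅` and
`ẋ₅/x₅ = -b₁ (x₁ + x₂) - b₂ (x₃ + x₄)`; since the exponent of `x₅` in `Q` is `d`, the weighted sum
`b₂ (…) - b₁ (…) + d (…)` vanishes. On the positive orthant `C = ∏ xₖ ^ eₖ` is a monomial, and for a
monomial `{xᵢ, ∏ xₖ ^ eₖ} = xᵢ · C · (A e)ᵢ`; the exponent vector `e` of `C` lies in the kernel of `A`.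
-/

open Filter Topology
open scoped Matrix

theorem HasFDerivAt.finsetProd_rpow_const {ι E : Type*} [NormedAddCommGroup E]
    [NormedSpace ℝ E] {s : Finset ι} {g : ι → E → ℝ} {g' : ι → E →L[ℝ] ℝ} (μ : ι → ℝ)
    {x : E} (hg : ∀ k ∈ s, HasFDerivAt (g k) (g' k) x) (hpos : ∀ k ∈ s, 0 < g k x) :
    HasFDerivAt (fun y => ∏ k ∈ s, g k y ^ μ k)
      ((∏ k ∈ s, g k x ^ μ k) • ∑ k ∈ s, (μ k / g k x) • g' k) x := by
  classical
  refine (HasFDerivAt.finsetProd fun k hk => (hg k hk).rpow_const (p := μ k)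
    (Or.inl (hpos k hk).ne')).congr_fderiv ?_
  rw [Finset.smul_sum]
  refine Finset.sum_congr rfl fun k hk => ?_
  rw [smul_smul, smul_smul, ← Finset.mul_prod_erase s _ hk, rpow_sub_one (hpos k hk).ne']
  congr 1
  field_simp

theorem HasFDerivAt.grad_eq {n : ℕ} {F : (Fin n → ℝ) → ℝ} {F' : (Fin n → ℝ) →L[ℝ] ℝ}
    {x : Fin n → ℝ} (h : HasFDerivAt F F' x) (i : Fin n) : grad F x i = F' (Pi.single i 1) := by
  rw [grad, h.fderiv]

theorem Filter.EventuallyEq.grad_eq {n : ℕ} {F G : (Fin n → ℝ) → ℝ} {x : Fin n → ℝ}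
    (h : F =ᶠ[𝓝 x] G) : grad F x = grad G x := by
  ext i
  rw [grad, grad, h.fderiv_eq]

theorem HasFDerivAt.lieDeriv_eq {n : ℕ} {F : (Fin n → ℝ) → ℝ} {F' : (Fin n → ℝ) →L[ℝ] ℝ}
    {x : Fin n → ℝ} (h : HasFDerivAt F F' x) (f : (Fin n → ℝ) → Fin n → ℝ) :
    lieDeriv F f x = F' (f x) := by
  classical
  conv_rhs => rw [pi_eq_sum_univ' (f x), map_sum]
  simp only [lieDeriv, h.grad_eq, map_smul, smul_eq_mul, mul_comm]

theorem grad_coord {n : ℕ} (i : Fin n) (x : Fin n → ℝ) (j : Fin n) :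
    grad (fun y => y i) x j = (Pi.single j 1 : Fin n → ℝ) i :=
  (ContinuousLinearMap.proj (R := ℝ) (φ := fun _ : Fin n => ℝ) i).hasFDerivAt.grad_eq j

theorem pbracket_coord_left {n : ℕ} (A : Matrix (Fin n) (Fin n) ℝ) (i : Fin n)
    (G : (Fin n → ℝ) → ℝ) (x : Fin n → ℝ) :
    pbracket A (fun y => y i) G x = x i * ∑ j, A i j * x j * grad G x j := by
  rw [pbracket, Fintype.sum_eq_single i fun k hk => by simp [grad_coord, hk.symm], Finset.mul_sum]
  simp only [grad_coord, Pi.single_eq_same]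
  exact Finset.sum_congr rfl fun j _ => by ring

noncomputable def rpowMonomial {n : ℕ} (e y : Fin n → ℝ) : ℝ := ∏ k, y k ^ e k

theorem mul_grad_rpowMonomial {n : ℕ} (e : Fin n → ℝ) {x : Fin n → ℝ} (hx : ∀ i, 0 < x i)
    (j : Fin n) : x j * grad (rpowMonomial e) x j = e j * rpowMonomial e x := by
  have h : HasFDerivAt (rpowMonomial e) _ x :=
    HasFDerivAt.finsetProd_rpow_const (s := Finset.univ) e
      (fun k _ => hasFDerivAt_apply k x) (fun k _ => hx k)
  rw [h.grad_eq]
  simp only [smul_apply, _root_.sum_apply, ContinuousLinearMap.proj_apply, Pi.single_apply, smul_eq_mul,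
    mul_ite, mul_one, mul_zero, Finset.sum_ite_eq', Finset.mem_univ, if_true]
  field_simp [(hx j).ne']
  rw [rpowMonomial, mul_comm]

theorem pbracket_coord_rpowMonomial {n : ℕ} (A : Matrix (Fin n) (Fin n) ℝ) (i : Fin n)
    (e : Fin n → ℝ) {x : Fin n → ℝ} (hx : ∀ i, 0 < x i) :
    pbracket A (fun y => y i) (rpowMonomial e) x = x i * rpowMonomial e x * (A *ᵥ e) i := by
  rw [pbracket_coord_left, Matrix.mulVec, dotProduct, Finset.mul_sum, Finset.mul_sum]
  refine Finset.sum_congr rfl fun j _ => ?_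
  rw [mul_assoc _ (x j), mul_grad_rpowMonomial e hx]
  ring

theorem pbracket_coord_eq_zero_of_mulVec_eq_zero {n : ℕ} {A : Matrix (Fin n) (Fin n) ℝ}
    {e : Fin n → ℝ} (hAe : A *ᵥ e = 0) {G : (Fin n → ℝ) → ℝ} {x : Fin n → ℝ}
    (hx : ∀ i, 0 < x i) (hG : G =ᶠ[𝓝 x] rpowMonomial e) (i : Fin n) :
    pbracket A (fun y => y i) G x = 0 := by
  rw [pbracket_coord_left, hG.grad_eq, ← pbracket_coord_left,
    pbracket_coord_rpowMonomial A i e hx, hAe, Pi.zero_apply, mul_zero]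

theorem lieDeriv_prod_rpow_linear {n : ℕ} {ι : Type*} (s : Finset ι)
    (ℓ : ι → (Fin n → ℝ) →L[ℝ] ℝ) (μ : ι → ℝ) (f : (Fin n → ℝ) → Fin n → ℝ)
    {x : Fin n → ℝ} (hpos : ∀ k ∈ s, 0 < ℓ k x) :
    lieDeriv (fun y => ∏ k ∈ s, ℓ k y ^ μ k) f x
      = (∏ k ∈ s, ℓ k x ^ μ k) * ∑ k ∈ s, μ k * (ℓ k (f x) / ℓ k x) := by
  rw [(HasFDerivAt.finsetProd_rpow_const μ (fun k _ => (ℓ k).hasFDerivAt) hpos).lieDeriv_eq]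
  simp only [smul_apply, _root_.sum_apply, smul_eq_mul]
  exact congrArg _ <| Finset.sum_congr rfl fun k _ => by ring

theorem div_rpow_mul_div_rpow_mul_rpow_eq_rpowMonomial {y : Fin 5 → ℝ} (hy : ∀ i, 0 < y i)
    (p q r : ℝ) :
    (y 0 / y 1) ^ p * (y 2 / y 3) ^ q * y 4 ^ r = rpowMonomial ![p, -p, q, -q, r] y := by
  simp only [rpowMonomial, Fin.prod_univ_five, Matrix.cons_val_zero, Matrix.cons_val_one,
    Matrix.cons_val, div_rpow (hy 0).le (hy 1).le, div_rpow (hy 2).le (hy 3).le, rpow_neg (hy 1).le,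
    rpow_neg (hy 3).le]
  ring

def lv200Matrix (a₁ a₂ b₁ b₂ d : ℝ) : Matrix (Fin 5) (Fin 5) ℝ :=
  !![0, a₁, d, d, b₁;
     -a₁, 0, d, d, b₁;
     -d, -d, 0, a₂, b₂;
     -d, -d, -a₂, 0, b₂;
     -b₁, -b₁, -b₂, -b₂, 0]

section LV200

variable (a₁ a₂ b₁ b₂ d : ℝ)

theorem lv200Matrix_mulVec (v : Fin 5 → ℝ) :
    lv200Matrix a₁ a₂ b₁ b₂ d *ᵥ v =
      ![a₁ * v 1 + d * (v 2 + v 3) + b₁ * v 4,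
        -a₁ * v 0 + d * (v 2 + v 3) + b₁ * v 4,
        -d * (v 0 + v 1) + a₂ * v 3 + b₂ * v 4,
        -d * (v 0 + v 1) - a₂ * v 2 + b₂ * v 4,
        -b₁ * (v 0 + v 1) - b₂ * (v 2 + v 3)] := by
  ext i
  fin_cases i <;>
  · simp only [Fin.zero_eta, Fin.mk_one, Fin.reduceFinMk, Fin.isValue, lv200Matrix, Matrix.mulVec,
      dotProduct, Fin.sum_univ_five, Matrix.of_apply,
      Matrix.cons_val', Matrix.cons_val_fin_one, Matrix.cons_val_zero, Matrix.cons_val_one,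
      Matrix.cons_val]
    ring

theorem lv200Matrix_mulVec_eq_zero :
    lv200Matrix a₁ a₂ b₁ b₂ d *ᵥ ![b₁ * a₂, -(b₁ * a₂), a₁ * b₂, -(a₁ * b₂), a₁ * a₂] = 0 := by
  rw [lv200Matrix_mulVec]
  ext i
  fin_cases i <;>
  · simp only [Fin.zero_eta, Fin.mk_one, Fin.reduceFinMk, Fin.isValue, Matrix.cons_val_zero,
      Matrix.cons_val_one, Matrix.cons_val, Pi.zero_apply]
    ring

theorem lieDeriv_lv200_eq_zero {x : Fin 5 → ℝ} (hx : ∀ i, 0 < x i) :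
    lieDeriv (fun y => (y 0 + y 1) ^ b₂ * (y 2 + y 3) ^ (-b₁) * y 4 ^ d)
      (lvField (lv200Matrix a₁ a₂ b₁ b₂ d) 0) x = 0 := by
  set f := lvField (lv200Matrix a₁ a₂ b₁ b₂ d) 0
  let ℓ : Fin 3 → (Fin 5 → ℝ) →L[ℝ] ℝ :=
    ![.proj 0 + .proj 1, .proj 2 + .proj 3, .proj 4]
  have hQ : (fun y : Fin 5 → ℝ => (y 0 + y 1) ^ b₂ * (y 2 + y 3) ^ (-b₁) * y 4 ^ d)
      = fun y => ∏ k, ℓ k y ^ ![b₂, -b₁, d] k := by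
    funext y
    simp [ℓ, Fin.prod_univ_three]
  have hpos : ∀ k ∈ Finset.univ, 0 < ℓ k x := by
    intro k _
    fin_cases k
    exacts [add_pos (hx 0) (hx 1), add_pos (hx 2) (hx 3), hx 4]
  have hf : ∀ i, f x i = x i * (lv200Matrix a₁ a₂ b₁ b₂ d *ᵥ x) i := fun i => by
    simp only [f, lvField, Pi.zero_apply, zero_add, Matrix.mulVec, dotProduct]
  have h01 : (f x 0 + f x 1) / (x 0 + x 1) = d * (x 2 + x 3) + b₁ * x 4 := by
    rw [div_eq_iff (add_pos (hx 0) (hx 1)).ne', hf, hf, lv200Matrix_mulVec]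
    simp only [Matrix.cons_val_zero, Matrix.cons_val_one]
    ring
  have h23 : (f x 2 + f x 3) / (x 2 + x 3) = -d * (x 0 + x 1) + b₂ * x 4 := by
    rw [div_eq_iff (add_pos (hx 2) (hx 3)).ne', hf, hf, lv200Matrix_mulVec]
    simp only [Matrix.cons_val]
    ring
  have h4 : f x 4 / x 4 = -b₁ * (x 0 + x 1) - b₂ * (x 2 + x 3) := by
    rw [div_eq_iff (hx 4).ne', hf, lv200Matrix_mulVec]
    simp only [Matrix.cons_val]
    ring
  rw [hQ, lieDeriv_prod_rpow_linear _ _ _ _ hpos]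
  refine mul_eq_zero_of_right _ ?_
  simp only [ℓ, Fin.sum_univ_three, Matrix.cons_val_zero, Matrix.cons_val_one, Matrix.cons_val,
    add_apply, ContinuousLinearMap.proj_apply, h01, h23, h4]
  ring

end LV200

theorem stmt15_general (a₁ a₂ a₃ b₁ b₂ c₁ c₂ : ℝ) :
    let d : ℝ := (b₁ * c₂ - b₂ * c₁) / a₃
    let A : Matrix (Fin 5) (Fin 5) ℝ :=
      !![0, a₁, d, d, b₁;
         -a₁, 0, d, d, b₁;
         -d, -d, 0, a₂, b₂;
         -d, -d, -a₂, 0, b₂;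
         -b₁, -b₁, -b₂, -b₂, 0]
    let Q : (Fin 5 → ℝ) → ℝ :=
      fun x => (x 0 + x 1) ^ b₂ * (x 2 + x 3) ^ (-b₁) * x 4 ^ ((c₂ * b₁ - c₁ * b₂) / a₃)
    let C : (Fin 5 → ℝ) → ℝ :=
      fun x => (x 0 / x 1) ^ (b₁ * a₂) * (x 2 / x 3) ^ (a₁ * b₂) * x 4 ^ (a₁ * a₂)
    ∀ x : Fin 5 → ℝ, (∀ i, 0 < x i) →
      lieDeriv Q (lvField A 0) x = 0 ∧
      ∀ i : Fin 5, pbracket A (fun y => y i) C x = 0 := by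
  intro d A Q C x hx
  have hA : A = lv200Matrix a₁ a₂ b₁ b₂ d := rfl
  refine ⟨?_, fun i => ?_⟩
  · have hexp : (c₂ * b₁ - c₁ * b₂) / a₃ = d := by ring
    simpa only [Q, hexp, hA] using lieDeriv_lv200_eq_zero a₁ a₂ b₁ b₂ d hx
  · have hpos : ∀ᶠ y in 𝓝 x, ∀ i, 0 < y i := eventually_all.2 fun i =>
      (continuous_apply i).continuousAt.eventually (lt_mem_nhds (hx i))
    exact pbracket_coord_eq_zero_of_mulVec_eq_zero (lv200Matrix_mulVec_eq_zero a₁ a₂ b₁ b₂ d) hx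
      (hpos.mono fun y hy => div_rpow_mul_div_rpow_mul_rpow_eq_rpowMonomial hy _ _ _) i

/-- the 5-dim type [2,0,0] LV system: Q is a constant of motion and
C is a Casimir of the bracket {x_i,x_j} = A_{ij} x_i x_j (a₃ ≠ 0). -/
theorem stmt15 (a₁ a₂ a₃ b₁ b₂ c₁ c₂ : ℝ) (ha₃ : a₃ ≠ 0) :
    let d : ℝ := (b₁ * c₂ - b₂ * c₁) / a₃
    let A : Matrix (Fin 5) (Fin 5) ℝ :=
      !![0, a₁, d, d, b₁;
         -a₁, 0, d, d, b₁;
         -d, -d, 0, a₂, b₂;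
         -d, -d, -a₂, 0, b₂;
         -b₁, -b₁, -b₂, -b₂, 0]
    let Q : (Fin 5 → ℝ) → ℝ :=
      fun x => (x 0 + x 1) ^ b₂ * (x 2 + x 3) ^ (-b₁) * x 4 ^ ((c₂ * b₁ - c₁ * b₂) / a₃)
    let C : (Fin 5 → ℝ) → ℝ :=
      fun x => (x 0 / x 1) ^ (b₁ * a₂) * (x 2 / x 3) ^ (a₁ * b₂) * x 4 ^ (a₁ * a₂)
    ∀ x : Fin 5 → ℝ, (∀ i, 0 < x i) →
      lieDeriv Q (lvField A 0) x = 0 ∧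
      ∀ i : Fin 5, pbracket A (fun y => y i) C x = 0 :=
  stmt15_general a₁ a₂ a₃ b₁ b₂ c₁ c₂
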